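/- Let m be a positive integer. Set S₂ = {m, m+1, m+2}, let S₁ = {m+1 − 1/√3, m+1 + 1/√3} be the set of roots of the derivative of the polynomial (z−m)(z−m−1)(z−m−2), and set S₃ = {∞}. Then for every nonconstant meromorphic function h on ℂ, the functions f = h + 2(m+1) and g = −h satisfy E_f(S_j, ∞) = E_g(S_j, ∞) for j = 1, 2, 3 (in particular E_f(S₁, 0) = E_g(S₁, 0), E_f(S₂, 3) = E_g(S₂, 3), E_f(S₃, 1) = E_g(S₃, 1)), yet f ≢ g. -/

import Mathlib

open Complex Filter MeasureTheory Metric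
open scoped Classical

/-- The order of a function at a point, as an integer (`0` if not meromorphic or of
order `⊤`, i.e. identically zero near the point). -/
noncomputable def mOrd (f : ℂ → ℂ) (z : ℂ) : ℤ :=
  if h : MeromorphicAt f z then ((meromorphicOrderAt f z).untopD 0) else 0

/-- Multiplicity of `z` as an `α`-point of `f`. -/
noncomputable def zMult (f : ℂ → ℂ) (α z : ℂ) : ℕ :=
  (mOrd (fun w => f w - α) z).toNat

/-- Multiplicity of `z` as a pole of `f`. -/
noncomputable def pMult (f : ℂ → ℂ) (z : ℂ) : ℕ :=
  (-(mOrd f z)).toNat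

/-- Pointwise contribution of `z` to the multiset `E_f(S, k)`:
an `α`-point (`α ∈ S`) of multiplicity `m` counts `m` times if `m ≤ k`, else `k+1` times. -/
noncomputable def Ecount (f : ℂ → ℂ) (S : Set ℂ) (k : ℕ) (z : ℂ) : ℕ :=
  ∑ᶠ α ∈ S, min (zMult f α z) (k + 1)

/-- `f` and `g` share the set `S ⊆ ℂ` with weight `k`, i.e. `E_f(S,k) = E_g(S,k)`. -/
def EshareEq (f g : ℂ → ℂ) (S : Set ℂ) (k : ℕ) : Prop :=
  ∀ z : ℂ, Ecount f S k z = Ecount g S k z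

/-- `f` and `g` share the set `S ⊆ ℂ` counting multiplicities (weight `∞`). -/
def EshareEqCM (f g : ℂ → ℂ) (S : Set ℂ) : Prop :=
  ∀ z : ℂ, (∑ᶠ α ∈ S, zMult f α z) = ∑ᶠ α ∈ S, zMult g α z

/-- `f` and `g` share `{∞}` with weight `k`. -/
def EpoleEq (f g : ℂ → ℂ) (k : ℕ) : Prop :=
  ∀ z : ℂ, min (pMult f z) (k + 1) = min (pMult g z) (k + 1)

/-- `f` and `g` share `{∞}` counting multiplicities. -/
def EpoleEqCM (f g : ℂ → ℂ) : Prop :=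
  ∀ z : ℂ, pMult f z = pMult g z

/-- Equality of meromorphic functions: `f ≡ g`, i.e. `f = g` off a countable set. -/
def MEq (f g : ℂ → ℂ) : Prop :=
  ∃ D : Set ℂ, D.Countable ∧ ∀ z ∉ D, f z = g z

/-- `f` is a nonconstant meromorphic function in the plane. -/
def MNonconst (f : ℂ → ℂ) : Prop :=
  MeromorphicOn f Set.univ ∧ ¬ ∃ c : ℂ, MEq f (fun _ => c)

/-- The unintegrated counting function of a pointwise (multiplicity) count `w`:
number of points in the closed disc of radius `t`, counted with `w`. -/
noncomputable def ncount (w : ℂ → ℕ) (t : ℝ) : ℕ :=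
  ∑ᶠ z ∈ closedBall (0 : ℂ) t, w z

/-- The integrated counting function associated to an unintegrated one. -/
noncomputable def integN (nf : ℝ → ℕ) (r : ℝ) : ℝ :=
  (∫ t in (0:ℝ)..r, ((nf t : ℝ) - (nf 0 : ℝ)) / t) + (nf 0 : ℝ) * Real.log r

/-- The Nevanlinna integrated counting function `N(r, f)` of the poles of `f`. -/
noncomputable def NN (f : ℂ → ℂ) (r : ℝ) : ℝ :=
  integN (ncount (pMult f)) r

/-- The Nevanlinna proximity function `m(r, f)`. -/
noncomputable def mprox (f : ℂ → ℂ) (r : ℝ) : ℝ :=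
  (2 * Real.pi)⁻¹ *
    ∫ θ in (0:ℝ)..(2 * Real.pi), Real.log (max ‖f (r * Complex.exp (θ * Complex.I))‖ 1)

/-- The Nevanlinna characteristic `T(r, f)`. -/
noncomputable def Tchar (f : ℂ → ℂ) (r : ℝ) : ℝ :=
  mprox f r + NN f r

/-- `u` is a quantity of type `S(r, h)` : `u r = o(T(r, h))` as `r → ∞`, outside a
possible exceptional set of finite linear measure. -/
def SmallWrt (h : ℂ → ℂ) (u : ℝ → ℝ) : Prop :=
  ∃ E : Set ℝ, volume E < ⊤ ∧
    Tendsto (fun r => u r / Tchar h r) (atTop ⊓ Filter.principal Eᶜ) (nhds 0)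


/-!
With `a = m + 1` we have `f = 2a - g`: the two functions differ by the reflection
`w ↦ 2a - w` of the value plane. It preserves pole orders and turns `β`-points of `g`
into `(2a - β)`-points of `f` of the same multiplicity, and each `Sⱼ` is symmetric about
`a`, so it permutes the points of `Sⱼ`. On the other hand `f ≡ g` would force `h ≡ -a`.
-/

lemma mOrd_eq_untopD (f : ℂ → ℂ) (z : ℂ) : mOrd f z = (meromorphicOrderAt f z).untopD 0 := by
  by_cases hf : MeromorphicAt f z
  · rw [mOrd, dif_pos hf]
  · rw [mOrd, dif_neg hf, meromorphicOrderAt_of_not_meromorphicAt hf]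
    rfl

lemma mOrd_neg (f : ℂ → ℂ) (z : ℂ) : mOrd (fun w => -f w) z = mOrd f z := by
  rw [mOrd_eq_untopD, mOrd_eq_untopD, meromorphicOrderAt_neg (f := f)]
  rfl

lemma zMult_const_sub (g : ℂ → ℂ) (c α z : ℂ) :
    zMult (fun w => c - g w) α z = zMult g (c - α) z := by
  have hfun : (fun w => c - g w - α) = fun w => -(g w - (c - α)) := by
    funext w
    ring
  rw [zMult, hfun, mOrd_neg, zMult]

lemma pMult_eq_zero_of_nonneg {f : ℂ → ℂ} {z : ℂ} (hf : 0 ≤ meromorphicOrderAt f z) :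
    pMult f z = 0 := by
  rw [pMult, mOrd_eq_untopD]
  cases hord : meromorphicOrderAt f z with
  | top => rfl
  | coe n =>
    rw [hord] at hf
    simp [WithTop.coe_nonneg.mp hf]

lemma pMult_add_const (f : ℂ → ℂ) (c z : ℂ) : pMult (fun w => f w + c) z = pMult f z := by
  by_cases hf : MeromorphicAt f z
  · have hc : 0 ≤ meromorphicOrderAt (fun _ => c) z := analyticAt_const.meromorphicOrderAt_nonneg
    rcases lt_or_ge (meromorphicOrderAt f z) 0 with hpole | hnonneg
    · have hord : meromorphicOrderAt (fun w => f w + c) z = meromorphicOrderAt f z :=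
        meromorphicOrderAt_add_eq_left_of_lt (MeromorphicAt.const c z) (hpole.trans_le hc)
      rw [pMult, pMult, mOrd_eq_untopD, mOrd_eq_untopD, hord]
    · have hsum : 0 ≤ meromorphicOrderAt (fun w => f w + c) z :=
        (le_min hnonneg hc).trans (meromorphicOrderAt_add hf (MeromorphicAt.const c z))
      rw [pMult_eq_zero_of_nonneg hsum, pMult_eq_zero_of_nonneg hnonneg]
  · have hfc : ¬ MeromorphicAt (fun w => f w + c) z := fun hfc => hf <| by
      simpa [Pi.sub_def] using hfc.sub (MeromorphicAt.const c z)
    rw [pMult, pMult, mOrd, mOrd, dif_neg hf, dif_neg hfc]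

lemma pMult_const_sub (g : ℂ → ℂ) (c z : ℂ) : pMult (fun w => c - g w) z = pMult g z := by
  have hfun : (fun w => c - g w) = fun w => -g w + c := by
    funext w
    ring
  rw [hfun, pMult_add_const, pMult, pMult, mOrd_neg]

lemma finsum_mem_const_sub {G M : Type*} [AddCommGroup G] [AddCommMonoid M] {S : Set G}
    {c : G} (hS : ∀ α ∈ S, c - α ∈ S) (F : G → M) :
    ∑ᶠ α ∈ S, F (c - α) = ∑ᶠ α ∈ S, F α := by
  have hinv : Set.InvOn (c - ·) (c - ·) S S :=
    ⟨fun α _ => sub_sub_cancel c α, fun α _ => sub_sub_cancel c α⟩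
  exact finsum_mem_eq_of_bijOn (c - ·) (hinv.bijOn hS hS) fun _ _ => rfl

section Reflection

variable {g : ℂ → ℂ} {c : ℂ} {S : Set ℂ}

lemma EshareEqCM_const_sub (hS : ∀ α ∈ S, c - α ∈ S) :
    EshareEqCM (fun w => c - g w) g S := fun z => by
  simp only [zMult_const_sub]
  exact finsum_mem_const_sub hS (zMult g · z)

lemma EshareEq_const_sub (hS : ∀ α ∈ S, c - α ∈ S) (k : ℕ) :
    EshareEq (fun w => c - g w) g S k := fun z => by
  simp only [Ecount, zMult_const_sub]
  exact finsum_mem_const_sub hS (fun α => min (zMult g α z) (k + 1))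

lemma EpoleEqCM_const_sub : EpoleEqCM (fun w => c - g w) g :=
  pMult_const_sub g c

lemma EpoleEq_const_sub (k : ℕ) : EpoleEq (fun w => c - g w) g k := fun z => by
  rw [pMult_const_sub]

end Reflection

lemma two_mul_sub_mem_sub_add_pair {R : Type*} [CommRing R] (a t : R) :
    ∀ α ∈ ({a - t, a + t} : Set R), 2 * a - α ∈ ({a - t, a + t} : Set R) := by
  simp only [Set.mem_insert_iff, Set.mem_singleton_iff]
  rintro α (rfl | rfl)
  exacts [Or.inr (by ring), Or.inl (by ring)]

lemma two_mul_add_one_sub_mem_consecutive_triple {R : Type*} [CommRing R] (b : R) :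
    ∀ α ∈ ({b, b + 1, b + 2} : Set R), 2 * (b + 1) - α ∈ ({b, b + 1, b + 2} : Set R) := by
  simp only [Set.mem_insert_iff, Set.mem_singleton_iff]
  rintro α (rfl | rfl | rfl)
  exacts [Or.inr (Or.inr (by ring)), Or.inr (Or.inl (by ring)), Or.inl (by ring)]

lemma setOf_quadratic_eq_zero (a : ℂ) :
    {z : ℂ | 3 * z ^ 2 - 6 * a * z + (3 * a ^ 2 - 1) = 0}
      = {a - 1 / (Real.sqrt 3 : ℂ), a + 1 / (Real.sqrt 3 : ℂ)} := by
  set t : ℂ := 1 / (Real.sqrt 3 : ℂ)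
  have ht : 3 * t ^ 2 = 1 := by
    have hsq : ((Real.sqrt 3 : ℝ) : ℂ) ^ 2 = 3 := by
      rw [← Complex.ofReal_pow, Real.sq_sqrt (by norm_num : (0 : ℝ) ≤ 3)]
      norm_num
    rw [div_pow, one_pow, hsq]
    norm_num
  ext z
  simp only [Set.mem_ofPred_eq, Set.mem_insert_iff, Set.mem_singleton_iff]
  constructor
  · intro hz
    have hfac : (z - (a - t)) * (z - (a + t)) = 0 := by
      linear_combination (1 / 3 : ℂ) * hz - (1 / 3 : ℂ) * ht
    rcases mul_eq_zero.mp hfac with hz | hz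
    · exact Or.inl (by linear_combination hz)
    · exact Or.inr (by linear_combination hz)
  · rintro (rfl | rfl) <;> linear_combination ht

theorem example_consecutive_integers_general
    (m : ℕ) (h : ℂ → ℂ) (hh : MNonconst h) :
    ({z : ℂ | 3 * z ^ 2 - 6 * ((m : ℂ) + 1) * z + (3 * ((m : ℂ) + 1) ^ 2 - 1) = 0}
        = {(m : ℂ) + 1 - 1 / (Real.sqrt 3 : ℂ), (m : ℂ) + 1 + 1 / (Real.sqrt 3 : ℂ)}) ∧
      EshareEqCM (fun z => h z + 2 * ((m : ℂ) + 1)) (fun z => -h z)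
        {(m : ℂ) + 1 - 1 / (Real.sqrt 3 : ℂ), (m : ℂ) + 1 + 1 / (Real.sqrt 3 : ℂ)} ∧
      EshareEqCM (fun z => h z + 2 * ((m : ℂ) + 1)) (fun z => -h z)
        {(m : ℂ), (m : ℂ) + 1, (m : ℂ) + 2} ∧
      EpoleEqCM (fun z => h z + 2 * ((m : ℂ) + 1)) (fun z => -h z) ∧
      EshareEq (fun z => h z + 2 * ((m : ℂ) + 1)) (fun z => -h z)
        {(m : ℂ) + 1 - 1 / (Real.sqrt 3 : ℂ), (m : ℂ) + 1 + 1 / (Real.sqrt 3 : ℂ)} 0 ∧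
      EshareEq (fun z => h z + 2 * ((m : ℂ) + 1)) (fun z => -h z)
        {(m : ℂ), (m : ℂ) + 1, (m : ℂ) + 2} 3 ∧
      EpoleEq (fun z => h z + 2 * ((m : ℂ) + 1)) (fun z => -h z) 1 ∧
      ¬ MEq (fun z => h z + 2 * ((m : ℂ) + 1)) (fun z => -h z) := by
  have hf : (fun z => h z + 2 * ((m : ℂ) + 1)) = fun z => 2 * ((m : ℂ) + 1) - -h z := by
    funext z
    ring
  have hS₁ := two_mul_sub_mem_sub_add_pair ((m : ℂ) + 1) (1 / (Real.sqrt 3 : ℂ))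
  have hS₂ := two_mul_add_one_sub_mem_consecutive_triple (m : ℂ)
  rw [hf]
  refine ⟨setOf_quadratic_eq_zero _, EshareEqCM_const_sub hS₁, EshareEqCM_const_sub hS₂,
    EpoleEqCM_const_sub, EshareEq_const_sub hS₁ 0, EshareEq_const_sub hS₂ 3, EpoleEq_const_sub 1,
    fun ⟨D, hD, hfg⟩ => hh.2 ⟨-((m : ℂ) + 1), D, hD, fun z hz => ?_⟩⟩
  linear_combination (1 / 2 : ℂ) * hfg z hz

/-- **Note 1.4 (general family of examples).** For a positive integer `m`, with
`S₂ = {m, m+1, m+2}`, `S₁ = {m+1 - 1/√3, m+1 + 1/√3}` the roots of the derivative of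
`(z-m)(z-m-1)(z-m-2)`, and `S₃ = {∞}`, the functions `f = h + 2(m+1)` and `g = -h`
share each `Sⱼ` counting multiplicities (hence with weights `(0, 3, 1)`) for every
nonconstant meromorphic `h`, yet `f ≢ g`. -/
theorem example_consecutive_integers
    (m : ℕ) (hm : 1 ≤ m) (h : ℂ → ℂ) (hh : MNonconst h) :
    ({z : ℂ | 3 * z ^ 2 - 6 * ((m : ℂ) + 1) * z + (3 * ((m : ℂ) + 1) ^ 2 - 1) = 0}
        = {(m : ℂ) + 1 - 1 / (Real.sqrt 3 : ℂ), (m : ℂ) + 1 + 1 / (Real.sqrt 3 : ℂ)}) ∧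
      EshareEqCM (fun z => h z + 2 * ((m : ℂ) + 1)) (fun z => -h z)
        {(m : ℂ) + 1 - 1 / (Real.sqrt 3 : ℂ), (m : ℂ) + 1 + 1 / (Real.sqrt 3 : ℂ)} ∧
      EshareEqCM (fun z => h z + 2 * ((m : ℂ) + 1)) (fun z => -h z)
        {(m : ℂ), (m : ℂ) + 1, (m : ℂ) + 2} ∧
      EpoleEqCM (fun z => h z + 2 * ((m : ℂ) + 1)) (fun z => -h z) ∧
      EshareEq (fun z => h z + 2 * ((m : ℂ) + 1)) (fun z => -h z)
        {(m : ℂ) + 1 - 1 / (Real.sqrt 3 : ℂ), (m : ℂ) + 1 + 1 / (Real.sqrt 3 : ℂ)} 0 ∧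
      EshareEq (fun z => h z + 2 * ((m : ℂ) + 1)) (fun z => -h z)
        {(m : ℂ), (m : ℂ) + 1, (m : ℂ) + 2} 3 ∧
      EpoleEq (fun z => h z + 2 * ((m : ℂ) + 1)) (fun z => -h z) 1 ∧
      ¬ MEq (fun z => h z + 2 * ((m : ℂ) + 1)) (fun z => -h z) :=
  example_consecutive_integers_general m h hh
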